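/- arXiv:2309.13502 — 7 statements merged into one kernel-verified Lean document; each statement's English description precedes it below -/
import Mathlib

section
/- Let E be a real inner product space, f : E → ℝ, and g : E → E such that f has gradient g x at every point x ∈ E (HasGradientAt f (g x) x for all x). If ⟪g x - g y, x - y⟫ > 0 for all x ≠ y, then f is strictly convex on E, i.e. StrictConvexOn ℝ Set.univ f. -/
/-- If `f` has gradient `g x` at every point and `g` is strictly monotone,
then `f` is strictly convex on the whole space. -/
theorem strictConvexOn_of_strictly_monotone_gradient
    {E : Type*} [NormedAddCommGroup E] [InnerProductSpace ℝ E] [CompleteSpace E]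
    (f : E → ℝ) (g : E → E)
    (hgrad : ∀ x : E, HasGradientAt f (g x) x)
    (hmono : ∀ x y : E, x ≠ y → (0 : ℝ) < inner ℝ (g x - g y) (x - y)) :
    StrictConvexOn ℝ (Set.univ : Set E) f := by
  constructor
  · exact convex_univ
  intro x _ y _ hxy a b ha hb hab
  set φ : ℝ → ℝ := fun t => f (x + t • (y - x)) with hφ
  have hyx : y - x ≠ 0 := sub_ne_zero.mpr (Ne.symm hxy)
  have hderiv : ∀ t : ℝ, HasDerivAt φ (inner ℝ (g (x + t • (y - x))) (y - x)) t := by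
    intro t
    have hc : HasDerivAt (fun t : ℝ => x + t • (y - x)) (y - x) t := by
      simpa using ((hasDerivAt_id t).smul_const (y - x)).const_add x
    have := ((hgrad (x + t • (y - x))).hasFDerivAt.comp_hasDerivAt t hc)
    simp at this
    exact this
  have hmono' : StrictMono (deriv φ) := by
    have hd : ∀ t : ℝ, deriv φ t = inner ℝ (g (x + t • (y - x))) (y - x) :=
      fun t => (hderiv t).deriv
    intro s t hst
    rw [hd s, hd t]
    have hne : x + t • (y - x) ≠ x + s • (y - x) := by
      intro h
      apply hyx
      have : (t - s) • (y - x) = 0 := by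
        have := sub_eq_zero.mpr h
        rw [add_sub_add_left_eq_sub, ← sub_smul] at this
        exact this
      rcases smul_eq_zero.mp this with h' | h'
      · exact absurd (sub_eq_zero.mp h') (ne_of_lt hst).symm
      · exact absurd h' hyx
    have := hmono _ _ hne
    rw [show x + t • (y - x) - (x + s • (y - x)) = (t - s) • (y - x) by
        rw [add_sub_add_left_eq_sub, ← sub_smul]] at this
    rw [inner_smul_right] at this
    rw [← sub_pos, ← inner_sub_left]
    nlinarith [sub_pos.mpr hst]
  have hcont : Continuous φ := by
    have : Differentiable ℝ φ := fun t => (hderiv t).differentiableAt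
    exact this.continuous
  have hconv : StrictConvexOn ℝ Set.univ φ :=
    StrictMono.strictConvexOn_univ_of_deriv hcont hmono'
  have h01 : (0 : ℝ) ≠ 1 := zero_ne_one
  have := hconv.2 (Set.mem_univ (0:ℝ)) (Set.mem_univ (1:ℝ)) h01 ha hb hab
  simp only [hφ, smul_eq_mul, mul_zero, mul_one, zero_smul, one_smul, zero_add,
    add_zero] at this
  have e1 : a • x + b • y = x + b • (y - x) := by
    rw [show a = 1 - b by linarith]; module
  have e2 : x + (y - x) = y := by abel
  rw [e2] at this
  rw [e1]
  exact this
end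

section
/- Fix x : ι₀ → ℝ and dual multipliers π₀ : ι₀ → ℝ, π₁ : ι₁ → ℝ, μʸ, θʸ : α → ℝ, μʷ, θʷ : β → ℝ. Define the Lagrangian L(y,w) = ½⟨y, R.mulVec y⟩ + ⟨r, y⟩ + ⟨π₀, G₀.mulVec y + H₀.mulVec w - x - b₀⟩ + ⟨π₁, G₁.mulVec y + H₁.mulVec w - b₁⟩ - ⟨μʸ, y⟩ + ⟨θʸ, y - ȳ⟩ - ⟨μʷ, w⟩ + ⟨θʷ, w - w̄⟩ for y : α → ℝ, w : β → ℝ. Then: (a) if H₀ᵀ.mulVec π₀ + H₁ᵀ.mulVec π₁ + θʷ - μʷ ≠ 0, the function L is unbounded below; (b) if H₀ᵀ.mulVec π₀ + H₁ᵀ.mulVec π₁ + θʷ - μʷ = 0, then, setting s = r + G₀ᵀ.mulVec π₀ + G₁ᵀ.mulVec π₁ + θʸ - μʸ, the infimum of L over all (y,w) equals -½⟨s, R⁻¹.mulVec s⟩ - ⟨ȳ, θʸ⟩ - ⟨w̄, θʷ⟩ - ⟨b₀, π₀⟩ - ⟨b₁, π₁⟩ - ⟨π₀, x⟩, and this infimum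 is attained at y = -R⁻¹.mulVec s (for any w). -/
open Matrix

/-- Explicit form of the Lagrangian dual function of the follower problem with affine cost
`Φ y = R.mulVec y + r`:
(a) if the `w`-stationarity expression is nonzero, the Lagrangian is unbounded below;
(b) if it vanishes, the infimum of the Lagrangian is the stated dual objective value,
attained at `y = -R⁻¹ s` (for any `w`). -/
theorem lagrangian_dual_of_follower
    {ι₀ ι₁ α β : Type*} [Fintype ι₀] [Fintype ι₁] [Fintype α] [Fintype β] [DecidableEq α]
    (G₀ : Matrix ι₀ α ℝ) (G₁ : Matrix ι₁ α ℝ) (H₀ : Matrix ι₀ β ℝ) (H₁ : Matrix ι₁ β ℝ)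
    (b₀ : ι₀ → ℝ) (b₁ : ι₁ → ℝ) (ybar : α → ℝ) (wbar : β → ℝ)
    (R : Matrix α α ℝ) (hsymm : R.IsSymm) (hpd : R.PosDef) (r : α → ℝ)
    (x : ι₀ → ℝ) (π₀ : ι₀ → ℝ) (π₁ : ι₁ → ℝ) (μy θy : α → ℝ) (μw θw : β → ℝ)
    (L : (α → ℝ) → (β → ℝ) → ℝ)
    (hL : ∀ (y : α → ℝ) (w : β → ℝ), L y w =
      (1/2) * (y ⬝ᵥ R.mulVec y) + r ⬝ᵥ y
      + π₀ ⬝ᵥ (G₀.mulVec y + H₀.mulVec w - x - b₀)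
      + π₁ ⬝ᵥ (G₁.mulVec y + H₁.mulVec w - b₁)
      - μy ⬝ᵥ y + θy ⬝ᵥ (y - ybar)
      - μw ⬝ᵥ w + θw ⬝ᵥ (w - wbar)) :
    (H₀.transpose.mulVec π₀ + H₁.transpose.mulVec π₁ + θw - μw ≠ 0 →
      ¬ BddBelow {v : ℝ | ∃ y w, L y w = v}) ∧
    (H₀.transpose.mulVec π₀ + H₁.transpose.mulVec π₁ + θw - μw = 0 →
      IsLeast {v : ℝ | ∃ y w, L y w = v}
        (-(1/2) * ((r + G₀.transpose.mulVec π₀ + G₁.transpose.mulVec π₁ + θy - μy) ⬝ᵥ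
            R⁻¹.mulVec (r + G₀.transpose.mulVec π₀ + G₁.transpose.mulVec π₁ + θy - μy))
          - ybar ⬝ᵥ θy - wbar ⬝ᵥ θw - b₀ ⬝ᵥ π₀ - b₁ ⬝ᵥ π₁ - π₀ ⬝ᵥ x) ∧
      ∀ w : β → ℝ,
        L (-(R⁻¹.mulVec (r + G₀.transpose.mulVec π₀ + G₁.transpose.mulVec π₁ + θy - μy))) w =
          (-(1/2) * ((r + G₀.transpose.mulVec π₀ + G₁.transpose.mulVec π₁ + θy - μy) ⬝ᵥ
              R⁻¹.mulVec (r + G₀.transpose.mulVec π₀ + G₁.transpose.mulVec π₁ + θy - μy))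
            - ybar ⬝ᵥ θy - wbar ⬝ᵥ θw - b₀ ⬝ᵥ π₀ - b₁ ⬝ᵥ π₁ - π₀ ⬝ᵥ x)) := by
  set c : β → ℝ := H₀.transpose.mulVec π₀ + H₁.transpose.mulVec π₁ + θw - μw with hc_def
  set s : α → ℝ := r + G₀.transpose.mulVec π₀ + G₁.transpose.mulVec π₁ + θy - μy with hs_def
  set K : ℝ := -(ybar ⬝ᵥ θy) - wbar ⬝ᵥ θw - b₀ ⬝ᵥ π₀ - b₁ ⬝ᵥ π₁ - π₀ ⬝ᵥ x with hK_def
  -- canonical form of L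
  have hL' : ∀ (y : α → ℝ) (w : β → ℝ),
      L y w = (1/2) * (y ⬝ᵥ R.mulVec y) + s ⬝ᵥ y + c ⬝ᵥ w + K := by
    intro y w
    rw [hL]
    simp only [hc_def, hs_def, hK_def, Matrix.mulVec_transpose,
      dotProduct_add, dotProduct_sub, add_dotProduct, sub_dotProduct, neg_dotProduct,
      Matrix.dotProduct_mulVec]
    rw [dotProduct_comm θy ybar, dotProduct_comm θw wbar,
      dotProduct_comm π₀ b₀, dotProduct_comm π₁ b₁]
    ring
  -- invertibility facts
  have hdet : IsUnit R.det := isUnit_iff_ne_zero.2 hpd.det_pos.ne'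
  set y₀ : α → ℝ := -(R⁻¹.mulVec s) with hy₀
  have hRy₀ : R.mulVec y₀ = -s := by
    rw [hy₀, Matrix.mulVec_neg, Matrix.mulVec_mulVec, Matrix.mul_nonsing_inv _ hdet,
      Matrix.one_mulVec]
  -- symmetry of the quadratic form
  have hswap : ∀ u v : α → ℝ, u ⬝ᵥ R.mulVec v = v ⬝ᵥ R.mulVec u := by
    intro u v
    rw [Matrix.dotProduct_mulVec, ← Matrix.mulVec_transpose, hsymm.eq, dotProduct_comm]
  have hqval : s ⬝ᵥ y₀ = -(s ⬝ᵥ R⁻¹.mulVec s) := by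
    rw [hy₀, dotProduct_neg]
  have hy₀q : y₀ ⬝ᵥ R.mulVec y₀ = s ⬝ᵥ R⁻¹.mulVec s := by
    rw [hRy₀, dotProduct_neg, dotProduct_comm, hqval, neg_neg]
  clear_value s c K y₀
  constructor
  · -- (a) unbounded below
    intro hc hbdd
    obtain ⟨m, hm⟩ := hbdd
    have hcc : (0:ℝ) < c ⬝ᵥ c := by
      have := (dotProduct_self_star_pos_iff (v := c)).2 hc
      simpa using this
    set t : ℝ := (m - K - 1) / (c ⬝ᵥ c) with ht
    have hmem : L 0 (t • c) ∈ {v : ℝ | ∃ y w, L y w = v} := ⟨0, t • c, rfl⟩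
    have hval : L 0 (t • c) = t * (c ⬝ᵥ c) + K := by
      rw [hL']
      simp [dotProduct_smul, smul_eq_mul]
    have h := hm hmem
    rw [hval, ht, div_mul_cancel₀ _ hcc.ne'] at h
    linarith
  · -- (b) minimum
    intro hc0
    have key : ∀ y : α → ℝ,
        -(1/2) * (s ⬝ᵥ R⁻¹.mulVec s) ≤ (1/2) * (y ⬝ᵥ R.mulVec y) + s ⬝ᵥ y := by
      intro y
      have hnn : 0 ≤ (y - y₀) ⬝ᵥ R.mulVec (y - y₀) := by
        have := hpd.posSemidef.re_dotProduct_nonneg (y - y₀)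
        simpa using this
      have h1 : y ⬝ᵥ R.mulVec y₀ = -(s ⬝ᵥ y) := by
        rw [hRy₀, dotProduct_neg, dotProduct_comm]
      have h2 : y₀ ⬝ᵥ R.mulVec y = -(s ⬝ᵥ y) := by rw [hswap, h1]
      have hexp : (y - y₀) ⬝ᵥ R.mulVec (y - y₀)
          = y ⬝ᵥ R.mulVec y - y ⬝ᵥ R.mulVec y₀ - y₀ ⬝ᵥ R.mulVec y + y₀ ⬝ᵥ R.mulVec y₀ := by
        simp only [Matrix.mulVec_sub, sub_dotProduct, dotProduct_sub]
        ring
      rw [hexp, h1, h2, hy₀q] at hnn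
      linarith
    have hval₀ : ∀ w : β → ℝ, L y₀ w =
        -(1/2) * (s ⬝ᵥ R⁻¹.mulVec s) - ybar ⬝ᵥ θy - wbar ⬝ᵥ θw - b₀ ⬝ᵥ π₀ - b₁ ⬝ᵥ π₁
          - π₀ ⬝ᵥ x := by
      intro w
      rw [hL', hy₀q, hqval, hc0, hK_def]
      simp only [zero_dotProduct]
      ring
    refine ⟨⟨⟨y₀, 0, hval₀ 0⟩, ?_⟩, hval₀⟩
    rintro v ⟨y, w, rfl⟩
    rw [hL' y w, hc0, hK_def]
    simp only [zero_dotProduct]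
    have := key y
    linarith
end

section
/- At every point p = (z, x, y, w, π₀, π₁, μʸ, μʷ, θʸ, θʷ) of the feasible set F, the KKT objective ⟨π₀, x⟩ - ⟨cₓ, x⟩ - ⟨c_z, z⟩ equals the Duality objective -⟨Φ y, y⟩ - ⟨w̄, θʷ⟩ - ⟨ȳ, θʸ⟩ - ⟨b₀, π₀⟩ - ⟨b₁, π₁⟩ - ⟨cₓ, x⟩ - ⟨c_z, z⟩. Consequently the set of KKT objective values over F equals the set of Duality objective values over F, and the two single-level formulations have the same optimal value (the supremum of the objective over F). -/
open Matrix

/-- A point of the single-level bilevel formulations: leader variables `z, x`, follower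
primal variables `y, w`, and dual multipliers `π₀, π₁, μʸ, μʷ, θʸ, θʷ`. -/
structure BilevelPoint (ι₀ ι₁ α β ζ : Type*) where
  z : ζ → ℝ
  x : ι₀ → ℝ
  y : α → ℝ
  w : β → ℝ
  pi0 : ι₀ → ℝ
  pi1 : ι₁ → ℝ
  muY : α → ℝ
  muW : β → ℝ
  thY : α → ℝ
  thW : β → ℝ

/-- On the feasible set `F` (KKT system with complementary slackness), the KKT-based
objective equals the Duality-based objective pointwise; hence the two formulations have the
same set of objective values and the same optimal value. -/
theorem kkt_and_duality_formulations_equivalent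
    {ι₀ ι₁ α β ζ : Type*} [Fintype ι₀] [Fintype ι₁] [Fintype α] [Fintype β] [Fintype ζ]
    (G₀ : Matrix ι₀ α ℝ) (G₁ : Matrix ι₁ α ℝ) (H₀ : Matrix ι₀ β ℝ) (H₁ : Matrix ι₁ β ℝ)
    (b₀ : ι₀ → ℝ) (b₁ : ι₁ → ℝ) (ybar : α → ℝ) (wbar : β → ℝ)
    (zbar : ζ → ℝ) (xbar : ι₀ → ℝ) (cz : ζ → ℝ) (cx : ι₀ → ℝ)
    (P : Set ((ζ → ℝ) × (ι₀ → ℝ))) (Φ : (α → ℝ) → (α → ℝ))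
    (F : Set (BilevelPoint ι₀ ι₁ α β ζ))
    (hF : ∀ p : BilevelPoint ι₀ ι₁ α β ζ, p ∈ F ↔
      ((p.z, p.x) ∈ P ∧
       0 ≤ p.z ∧ p.z ≤ zbar ∧ 0 ≤ p.x ∧ p.x ≤ xbar ∧
       0 ≤ p.pi0 ∧ 0 ≤ p.pi1 ∧
       G₀.mulVec p.y + H₀.mulVec p.w - p.x = b₀ ∧
       G₁.mulVec p.y + H₁.mulVec p.w = b₁ ∧
       0 ≤ p.y ∧ p.y ≤ ybar ∧ 0 ≤ p.w ∧ p.w ≤ wbar ∧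
       0 ≤ p.muY ∧ 0 ≤ p.muW ∧ 0 ≤ p.thY ∧ 0 ≤ p.thW ∧
       Φ p.y + G₀.transpose.mulVec p.pi0 + G₁.transpose.mulVec p.pi1 + p.thY - p.muY = 0 ∧
       H₀.transpose.mulVec p.pi0 + H₁.transpose.mulVec p.pi1 + p.thW - p.muW = 0 ∧
       p.y ⬝ᵥ p.muY = 0 ∧ (ybar - p.y) ⬝ᵥ p.thY = 0 ∧
       p.w ⬝ᵥ p.muW = 0 ∧ (wbar - p.w) ⬝ᵥ p.thW = 0)) :
    (∀ p ∈ F,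
      p.pi0 ⬝ᵥ p.x - cx ⬝ᵥ p.x - cz ⬝ᵥ p.z =
        -(Φ p.y ⬝ᵥ p.y) - wbar ⬝ᵥ p.thW - ybar ⬝ᵥ p.thY
          - b₀ ⬝ᵥ p.pi0 - b₁ ⬝ᵥ p.pi1 - cx ⬝ᵥ p.x - cz ⬝ᵥ p.z) ∧
    ((fun p : BilevelPoint ι₀ ι₁ α β ζ => p.pi0 ⬝ᵥ p.x - cx ⬝ᵥ p.x - cz ⬝ᵥ p.z) '' F =
      (fun p : BilevelPoint ι₀ ι₁ α β ζ =>
        -(Φ p.y ⬝ᵥ p.y) - wbar ⬝ᵥ p.thW - ybar ⬝ᵥ p.thY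
          - b₀ ⬝ᵥ p.pi0 - b₁ ⬝ᵥ p.pi1 - cx ⬝ᵥ p.x - cz ⬝ᵥ p.z) '' F) ∧
    sSup ((fun p : BilevelPoint ι₀ ι₁ α β ζ => p.pi0 ⬝ᵥ p.x - cx ⬝ᵥ p.x - cz ⬝ᵥ p.z) '' F) =
      sSup ((fun p : BilevelPoint ι₀ ι₁ α β ζ =>
        -(Φ p.y ⬝ᵥ p.y) - wbar ⬝ᵥ p.thW - ybar ⬝ᵥ p.thY
          - b₀ ⬝ᵥ p.pi0 - b₁ ⬝ᵥ p.pi1 - cx ⬝ᵥ p.x - cz ⬝ᵥ p.z) '' F) := by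
  have key : ∀ p ∈ F,
      p.pi0 ⬝ᵥ p.x - cx ⬝ᵥ p.x - cz ⬝ᵥ p.z =
        -(Φ p.y ⬝ᵥ p.y) - wbar ⬝ᵥ p.thW - ybar ⬝ᵥ p.thY
          - b₀ ⬝ᵥ p.pi0 - b₁ ⬝ᵥ p.pi1 - cx ⬝ᵥ p.x - cz ⬝ᵥ p.z := by
    intro p hp
    obtain ⟨-, -, -, -, -, -, -, hprim0, hprim1, -, -, -, -, -, -, -, -, hstY, hstW,
      hcs1, hcs2, hcs3, hcs4⟩ := (hF p).1 hp
    have e1 := congrArg (fun v => v ⬝ᵥ p.y) hstY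
    have e2 := congrArg (fun v => v ⬝ᵥ p.w) hstW
    have e3 := congrArg (fun v => p.pi0 ⬝ᵥ v) hprim0
    have e4 := congrArg (fun v => p.pi1 ⬝ᵥ v) hprim1
    simp only [add_dotProduct, sub_dotProduct, zero_dotProduct, dotProduct_add,
      dotProduct_sub, Matrix.mulVec_transpose, ← Matrix.dotProduct_mulVec] at e1 e2 e3 e4
    rw [sub_dotProduct] at hcs2 hcs4
    have c1 : p.thY ⬝ᵥ p.y = p.y ⬝ᵥ p.thY := dotProduct_comm _ _
    have c2 : p.muY ⬝ᵥ p.y = p.y ⬝ᵥ p.muY := dotProduct_comm _ _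
    have c3 : p.thW ⬝ᵥ p.w = p.w ⬝ᵥ p.thW := dotProduct_comm _ _
    have c4 : p.muW ⬝ᵥ p.w = p.w ⬝ᵥ p.muW := dotProduct_comm _ _
    have c5 : b₀ ⬝ᵥ p.pi0 = p.pi0 ⬝ᵥ b₀ := dotProduct_comm _ _
    have c6 : b₁ ⬝ᵥ p.pi1 = p.pi1 ⬝ᵥ b₁ := dotProduct_comm _ _
    linarith
  refine ⟨key, ?_, ?_⟩
  · exact Set.image_congr key
  · rw [Set.image_congr key]
end

section
/- Suppose (y, w) is primal feasible for the leader vector x, the stationarity conditions hold for the multipliers (π₀, π₁, μʸ, μʷ, θʸ, θʷ), and the multipliers satisfy μʸ ≥ 0, μʷ ≥ 0, θʸ ≥ 0, θʷ ≥ 0 (no complementary slackness assumed). Then ⟨π₀, x⟩ ≥ -⟨Φ y, y⟩ - ⟨w̄, θʷ⟩ - ⟨ȳ, θʸ⟩ - ⟨b₀, π₀⟩ - ⟨b₁, π₁⟩. -/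
open Matrix

lemma dot_nonneg' {α : Type*} [Fintype α] {u v : α → ℝ} (hu : 0 ≤ u) (hv : 0 ≤ v) :
    0 ≤ u ⬝ᵥ v :=
  Finset.sum_nonneg fun i _ => mul_nonneg (hu i) (hv i)

/-- Weak-duality inequality: under primal feasibility, stationarity and nonnegative
multipliers (no complementary slackness),
`⟨π₀, x⟩ ≥ -⟨Φ y, y⟩ - ⟨w̄, θʷ⟩ - ⟨ȳ, θʸ⟩ - ⟨b₀, π₀⟩ - ⟨b₁, π₁⟩`. -/
theorem weak_duality_inequality
    {ι₀ ι₁ α β : Type*} [Fintype ι₀] [Fintype ι₁] [Fintype α] [Fintype β]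
    (G₀ : Matrix ι₀ α ℝ) (G₁ : Matrix ι₁ α ℝ) (H₀ : Matrix ι₀ β ℝ) (H₁ : Matrix ι₁ β ℝ)
    (b₀ : ι₀ → ℝ) (b₁ : ι₁ → ℝ) (ybar : α → ℝ) (wbar : β → ℝ)
    (Φ : (α → ℝ) → (α → ℝ))
    (x : ι₀ → ℝ) (y : α → ℝ) (w : β → ℝ)
    (π₀ : ι₀ → ℝ) (π₁ : ι₁ → ℝ) (μy θy : α → ℝ) (μw θw : β → ℝ)
    (hpf₀ : G₀.mulVec y + H₀.mulVec w - x = b₀)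
    (hpf₁ : G₁.mulVec y + H₁.mulVec w = b₁)
    (hy₀ : 0 ≤ y) (hyub : y ≤ ybar) (hw₀ : 0 ≤ w) (hwub : w ≤ wbar)
    (hst₁ : Φ y + G₀.transpose.mulVec π₀ + G₁.transpose.mulVec π₁ + θy - μy = 0)
    (hst₂ : H₀.transpose.mulVec π₀ + H₁.transpose.mulVec π₁ + θw - μw = 0)
    (hμy : 0 ≤ μy) (hμw : 0 ≤ μw) (hθy : 0 ≤ θy) (hθw : 0 ≤ θw) :
    -(Φ y ⬝ᵥ y) - wbar ⬝ᵥ θw - ybar ⬝ᵥ θy - b₀ ⬝ᵥ π₀ - b₁ ⬝ᵥ π₁ ≤ π₀ ⬝ᵥ x := by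
  have h1 : (Φ y + G₀.transpose.mulVec π₀ + G₁.transpose.mulVec π₁ + θy - μy) ⬝ᵥ y = 0 := by
    rw [hst₁, zero_dotProduct]
  have h2 : (H₀.transpose.mulVec π₀ + H₁.transpose.mulVec π₁ + θw - μw) ⬝ᵥ w = 0 := by
    rw [hst₂, zero_dotProduct]
  simp only [sub_dotProduct, add_dotProduct] at h1 h2
  have tG₀ : G₀.transpose.mulVec π₀ ⬝ᵥ y = π₀ ⬝ᵥ G₀.mulVec y := by
    rw [mulVec_transpose, ← dotProduct_mulVec]
  have tG₁ : G₁.transpose.mulVec π₁ ⬝ᵥ y = π₁ ⬝ᵥ G₁.mulVec y := by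
    rw [mulVec_transpose, ← dotProduct_mulVec]
  have tH₀ : H₀.transpose.mulVec π₀ ⬝ᵥ w = π₀ ⬝ᵥ H₀.mulVec w := by
    rw [mulVec_transpose, ← dotProduct_mulVec]
  have tH₁ : H₁.transpose.mulVec π₁ ⬝ᵥ w = π₁ ⬝ᵥ H₁.mulVec w := by
    rw [mulVec_transpose, ← dotProduct_mulVec]
  rw [tG₀, tG₁] at h1
  rw [tH₀, tH₁] at h2
  have hx : π₀ ⬝ᵥ x = π₀ ⬝ᵥ (G₀.mulVec y) + π₀ ⬝ᵥ (H₀.mulVec w) - π₀ ⬝ᵥ b₀ := by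
    have := congrArg (fun v => π₀ ⬝ᵥ v) hpf₀
    simp only [dotProduct_sub, dotProduct_add] at this
    linarith
  have hb₁ : π₁ ⬝ᵥ (G₁.mulVec y) + π₁ ⬝ᵥ (H₁.mulVec w) = π₁ ⬝ᵥ b₁ := by
    have := congrArg (fun v => π₁ ⬝ᵥ v) hpf₁
    simpa [dotProduct_add] using this
  have n1 : 0 ≤ μy ⬝ᵥ y := dot_nonneg' hμy hy₀
  have n2 : 0 ≤ μw ⬝ᵥ w := dot_nonneg' hμw hw₀
  have n3 : 0 ≤ θy ⬝ᵥ (ybar - y) := dot_nonneg' hθy (by simpa using sub_nonneg.mpr hyub)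
  have n4 : 0 ≤ θw ⬝ᵥ (wbar - w) := dot_nonneg' hθw (by simpa using sub_nonneg.mpr hwub)
  rw [dotProduct_sub] at n3 n4
  have cy : ybar ⬝ᵥ θy = θy ⬝ᵥ ybar := dotProduct_comm _ _
  have cw : wbar ⬝ᵥ θw = θw ⬝ᵥ wbar := dotProduct_comm _ _
  have cb₀ : b₀ ⬝ᵥ π₀ = π₀ ⬝ᵥ b₀ := dotProduct_comm _ _
  have cb₁ : b₁ ⬝ᵥ π₁ = π₁ ⬝ᵥ b₁ := dotProduct_comm _ _
  linarith
end

section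
/- Over the relaxed feasible set F_relax, the supremum (taken in the extended reals EReal) of the Duality-based relaxation objective -⟨Φ y, y⟩ - ⟨w̄, θʷ⟩ - ⟨ȳ, θʸ⟩ - ⟨b₀, π₀⟩ - ⟨b₁, π₁⟩ - ⟨cₓ, x⟩ - ⟨c_z, z⟩ is at most the supremum of the KKT-based relaxation objective ⟨π₀, x⟩ - ⟨cₓ, x⟩ - ⟨c_z, z⟩; indeed the former is pointwise at most the latter at every point of F_relax. -/
open Matrix

/-- Over the relaxed feasible set (complementarity and integrality dropped), the
Duality-based relaxation objective is pointwise at most the KKT-based relaxation objective,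
and hence its supremum (in `EReal`) is at most that of the KKT-based relaxation. -/
theorem duality_relaxation_le_kkt_relaxation
    {ι₀ ι₁ α β ζ : Type*} [Fintype ι₀] [Fintype ι₁] [Fintype α] [Fintype β] [Fintype ζ]
    (G₀ : Matrix ι₀ α ℝ) (G₁ : Matrix ι₁ α ℝ) (H₀ : Matrix ι₀ β ℝ) (H₁ : Matrix ι₁ β ℝ)
    (b₀ : ι₀ → ℝ) (b₁ : ι₁ → ℝ) (ybar : α → ℝ) (wbar : β → ℝ)
    (zbar : ζ → ℝ) (xbar : ι₀ → ℝ) (cz : ζ → ℝ) (cx : ι₀ → ℝ)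
    (Pbar : Set ((ζ → ℝ) × (ι₀ → ℝ))) (Φ : (α → ℝ) → (α → ℝ))
    (Frelax : Set (BilevelPoint ι₀ ι₁ α β ζ))
    (hF : ∀ p : BilevelPoint ι₀ ι₁ α β ζ, p ∈ Frelax ↔
      ((p.z, p.x) ∈ Pbar ∧
       0 ≤ p.z ∧ p.z ≤ zbar ∧ 0 ≤ p.x ∧ p.x ≤ xbar ∧
       0 ≤ p.pi0 ∧ 0 ≤ p.pi1 ∧
       G₀.mulVec p.y + H₀.mulVec p.w - p.x = b₀ ∧
       G₁.mulVec p.y + H₁.mulVec p.w = b₁ ∧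
       0 ≤ p.y ∧ p.y ≤ ybar ∧ 0 ≤ p.w ∧ p.w ≤ wbar ∧
       0 ≤ p.muY ∧ 0 ≤ p.muW ∧ 0 ≤ p.thY ∧ 0 ≤ p.thW ∧
       Φ p.y + G₀.transpose.mulVec p.pi0 + G₁.transpose.mulVec p.pi1 + p.thY - p.muY = 0 ∧
       H₀.transpose.mulVec p.pi0 + H₁.transpose.mulVec p.pi1 + p.thW - p.muW = 0)) :
    (∀ p ∈ Frelax,
      -(Φ p.y ⬝ᵥ p.y) - wbar ⬝ᵥ p.thW - ybar ⬝ᵥ p.thY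
          - b₀ ⬝ᵥ p.pi0 - b₁ ⬝ᵥ p.pi1 - cx ⬝ᵥ p.x - cz ⬝ᵥ p.z ≤
        p.pi0 ⬝ᵥ p.x - cx ⬝ᵥ p.x - cz ⬝ᵥ p.z) ∧
    (⨆ p ∈ Frelax,
        ((-(Φ p.y ⬝ᵥ p.y) - wbar ⬝ᵥ p.thW - ybar ⬝ᵥ p.thY
          - b₀ ⬝ᵥ p.pi0 - b₁ ⬝ᵥ p.pi1 - cx ⬝ᵥ p.x - cz ⬝ᵥ p.z : ℝ) : EReal)) ≤
      ⨆ p ∈ Frelax, ((p.pi0 ⬝ᵥ p.x - cx ⬝ᵥ p.x - cz ⬝ᵥ p.z : ℝ) : EReal) := by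

  have key : ∀ p ∈ Frelax,
      -(Φ p.y ⬝ᵥ p.y) - wbar ⬝ᵥ p.thW - ybar ⬝ᵥ p.thY
          - b₀ ⬝ᵥ p.pi0 - b₁ ⬝ᵥ p.pi1 - cx ⬝ᵥ p.x - cz ⬝ᵥ p.z ≤
        p.pi0 ⬝ᵥ p.x - cx ⬝ᵥ p.x - cz ⬝ᵥ p.z := by
    intro p hp
    obtain ⟨-, -, -, -, -, hpi0, hpi1, hc0, hc1, hy0, hyb, hw0, hwb,
      hmuY, hmuW, hthY, hthW, hs1, hs2⟩ := (hF p).1 hp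
    have E1 : (Φ p.y) ⬝ᵥ p.y + p.pi0 ⬝ᵥ (G₀.mulVec p.y) + p.pi1 ⬝ᵥ (G₁.mulVec p.y)
        + p.thY ⬝ᵥ p.y - p.muY ⬝ᵥ p.y = 0 := by
      have := congrArg (fun v => v ⬝ᵥ p.y) hs1
      simpa [add_dotProduct, sub_dotProduct, Matrix.mulVec_transpose,
        ← Matrix.dotProduct_mulVec] using this
    have E2 : p.pi0 ⬝ᵥ (H₀.mulVec p.w) + p.pi1 ⬝ᵥ (H₁.mulVec p.w)
        + p.thW ⬝ᵥ p.w - p.muW ⬝ᵥ p.w = 0 := by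
      have := congrArg (fun v => v ⬝ᵥ p.w) hs2
      simpa [add_dotProduct, sub_dotProduct, Matrix.mulVec_transpose,
        ← Matrix.dotProduct_mulVec] using this
    have E3 : p.pi0 ⬝ᵥ (G₀.mulVec p.y) + p.pi0 ⬝ᵥ (H₀.mulVec p.w) - p.pi0 ⬝ᵥ p.x
        = p.pi0 ⬝ᵥ b₀ := by
      have := congrArg (fun v => p.pi0 ⬝ᵥ v) hc0
      simpa [dotProduct_add, dotProduct_sub] using this
    have E4 : p.pi1 ⬝ᵥ (G₁.mulVec p.y) + p.pi1 ⬝ᵥ (H₁.mulVec p.w) = p.pi1 ⬝ᵥ b₁ := by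
      have := congrArg (fun v => p.pi1 ⬝ᵥ v) hc1
      simpa [dotProduct_add] using this
    have I1 : p.thY ⬝ᵥ p.y ≤ p.thY ⬝ᵥ ybar :=
      Finset.sum_le_sum fun i _ => mul_le_mul_of_nonneg_left (hyb i) (hthY i)
    have I2 : p.thW ⬝ᵥ p.w ≤ p.thW ⬝ᵥ wbar :=
      Finset.sum_le_sum fun i _ => mul_le_mul_of_nonneg_left (hwb i) (hthW i)
    have I3 : 0 ≤ p.muY ⬝ᵥ p.y :=
      Finset.sum_nonneg fun i _ => mul_nonneg (hmuY i) (hy0 i)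
    have I4 : 0 ≤ p.muW ⬝ᵥ p.w :=
      Finset.sum_nonneg fun i _ => mul_nonneg (hmuW i) (hw0 i)
    have C1 : ybar ⬝ᵥ p.thY = p.thY ⬝ᵥ ybar := dotProduct_comm _ _
    have C2 : wbar ⬝ᵥ p.thW = p.thW ⬝ᵥ wbar := dotProduct_comm _ _
    have C3 : b₀ ⬝ᵥ p.pi0 = p.pi0 ⬝ᵥ b₀ := dotProduct_comm _ _
    have C4 : b₁ ⬝ᵥ p.pi1 = p.pi1 ⬝ᵥ b₁ := dotProduct_comm _ _
    linarith
  refine ⟨key, ?_⟩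
  refine iSup₂_mono fun p hp => ?_
  exact EReal.coe_le_coe_iff.2 (key p hp)
end

section
/- Suppose there is a point p̊ = (ż, ẋ, ẏ, ẇ, π̊₀, π̊₁, μ̊ʸ, μ̊ʷ, θ̊ʸ, θ̊ʷ) in the relaxed feasible set F_relax, and a ray (ỹ, w̃, π̃₀, π̃₁, μ̃ʸ, μ̃ʷ, θ̃ʸ, θ̃ʷ) with all components nonnegative, with ỹᵢ = 0 for every i ∈ Sʸ, w̃ⱼ = 0 for every j ∈ Sʷ, θ̃ʸ supported on Sʸ and θ̃ʷ supported on Sʷ, satisfying the homogeneous system G₀.mulVec ỹ + H₀.mulVec w̃ = 0, G₁.mulVec ỹ + H₁.mulVec w̃ = 0, R.mulVec ỹ + G₀ᵀ.mulVec π̃₀ + G₁ᵀ.mulVec π̃₁ + θ̃ʸ - μ̃ʸ = 0, and H₀ᵀ.mulVec π̃₀ + H₁ᵀ.mulVec π̃₁ + θ̃ʷ - μ̃ʷ = 0, and such that ⟨π̃₀, ẋ⟩ > 0. Then for every M ∈ ℝ there exists a point (z, x, y, w, π₀, π₁, μʸ, μʷ, θʸ, θʷ) ∈ F_relax with (z,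 x) = (ż, ẋ) whose objective value ⟨π₀, x⟩ - ⟨cₓ, x⟩ - ⟨c_z, z⟩ exceeds M; in particular the set of objective values of the KKT-based relaxation is not bounded above. -/
open Matrix

/-- If the relaxed feasible set contains a point `p₀` and there is a nonnegative ray of the
homogeneous system with `⟨π̃₀, p₀.x⟩ > 0`, then the KKT-based relaxation objective is
unbounded above along feasible points with the same leader decision as `p₀`. -/
theorem kkt_relaxation_unbounded_of_ray
    {ι₀ ι₁ α β ζ : Type*} [Fintype ι₀] [Fintype ι₁] [Fintype α] [Fintype β] [Fintype ζ]
    (G₀ : Matrix ι₀ α ℝ) (G₁ : Matrix ι₁ α ℝ) (H₀ : Matrix ι₀ β ℝ) (H₁ : Matrix ι₁ β ℝ)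
    (b₀ : ι₀ → ℝ) (b₁ : ι₁ → ℝ)
    (zbar : ζ → ℝ) (xbar : ι₀ → ℝ) (cz : ζ → ℝ) (cx : ι₀ → ℝ)
    (Pbar : Set ((ζ → ℝ) × (ι₀ → ℝ)))
    (R : Matrix α α ℝ) (r : α → ℝ)
    (Sy : Set α) (Sw : Set β) (ybar : α → ℝ) (wbar : β → ℝ)
    (Frelax : Set (BilevelPoint ι₀ ι₁ α β ζ))
    (hF : ∀ p : BilevelPoint ι₀ ι₁ α β ζ, p ∈ Frelax ↔
      ((p.z, p.x) ∈ Pbar ∧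
       0 ≤ p.z ∧ p.z ≤ zbar ∧ 0 ≤ p.x ∧ p.x ≤ xbar ∧
       0 ≤ p.pi0 ∧ 0 ≤ p.pi1 ∧
       G₀.mulVec p.y + H₀.mulVec p.w - p.x = b₀ ∧
       G₁.mulVec p.y + H₁.mulVec p.w = b₁ ∧
       0 ≤ p.y ∧ (∀ i ∈ Sy, p.y i ≤ ybar i) ∧
       0 ≤ p.w ∧ (∀ j ∈ Sw, p.w j ≤ wbar j) ∧
       0 ≤ p.muY ∧ 0 ≤ p.muW ∧
       0 ≤ p.thY ∧ (∀ i ∉ Sy, p.thY i = 0) ∧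
       0 ≤ p.thW ∧ (∀ j ∉ Sw, p.thW j = 0) ∧
       R.mulVec p.y + r + G₀.transpose.mulVec p.pi0 + G₁.transpose.mulVec p.pi1
         + p.thY - p.muY = 0 ∧
       H₀.transpose.mulVec p.pi0 + H₁.transpose.mulVec p.pi1 + p.thW - p.muW = 0))
    (p₀ : BilevelPoint ι₀ ι₁ α β ζ) (hp₀ : p₀ ∈ Frelax)
    (ty : α → ℝ) (tw : β → ℝ) (tπ₀ : ι₀ → ℝ) (tπ₁ : ι₁ → ℝ)
    (tμy : α → ℝ) (tμw : β → ℝ) (tθy : α → ℝ) (tθw : β → ℝ)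
    (hty : 0 ≤ ty) (htw : 0 ≤ tw) (htπ₀ : 0 ≤ tπ₀) (htπ₁ : 0 ≤ tπ₁)
    (htμy : 0 ≤ tμy) (htμw : 0 ≤ tμw) (htθy : 0 ≤ tθy) (htθw : 0 ≤ tθw)
    (hty_fin : ∀ i ∈ Sy, ty i = 0) (htw_fin : ∀ j ∈ Sw, tw j = 0)
    (htθy_supp : ∀ i ∉ Sy, tθy i = 0) (htθw_supp : ∀ j ∉ Sw, tθw j = 0)
    (hhom₀ : G₀.mulVec ty + H₀.mulVec tw = 0)
    (hhom₁ : G₁.mulVec ty + H₁.mulVec tw = 0)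
    (hhom₂ : R.mulVec ty + G₀.transpose.mulVec tπ₀ + G₁.transpose.mulVec tπ₁
      + tθy - tμy = 0)
    (hhom₃ : H₀.transpose.mulVec tπ₀ + H₁.transpose.mulVec tπ₁ + tθw - tμw = 0)
    (hpos : 0 < tπ₀ ⬝ᵥ p₀.x) :
    (∀ M : ℝ, ∃ p ∈ Frelax, p.z = p₀.z ∧ p.x = p₀.x ∧
      M < p.pi0 ⬝ᵥ p.x - cx ⬝ᵥ p.x - cz ⬝ᵥ p.z) ∧
    ¬ BddAbove {v : ℝ | ∃ p ∈ Frelax, p.pi0 ⬝ᵥ p.x - cx ⬝ᵥ p.x - cz ⬝ᵥ p.z = v} := by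
  obtain ⟨hP, hz0, hzb, hx0, hxb, hπ0, hπ1, heq0, heq1, hy0, hyb, hw0, hwb,
    hμy, hμw, hθy, hθysupp, hθw, hθwsupp, hst1, hst2⟩ := (hF p₀).mp hp₀
  set d : ℝ := tπ₀ ⬝ᵥ p₀.x with hd
  set base : ℝ := p₀.pi0 ⬝ᵥ p₀.x - cx ⬝ᵥ p₀.x - cz ⬝ᵥ p₀.z with hbase
  have main : ∀ M : ℝ, ∃ p ∈ Frelax, p.z = p₀.z ∧ p.x = p₀.x ∧
      M < p.pi0 ⬝ᵥ p.x - cx ⬝ᵥ p.x - cz ⬝ᵥ p.z := by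
    intro M
    set t : ℝ := max 1 ((M - base + 1) / d) with ht
    have ht0 : (0:ℝ) ≤ t := le_trans zero_le_one (le_max_left _ _)
    refine ⟨⟨p₀.z, p₀.x, p₀.y + t • ty, p₀.w + t • tw, p₀.pi0 + t • tπ₀,
      p₀.pi1 + t • tπ₁, p₀.muY + t • tμy, p₀.muW + t • tμw,
      p₀.thY + t • tθy, p₀.thW + t • tθw⟩, ?_, rfl, rfl, ?_⟩
    · rw [hF]
      refine ⟨hP, hz0, hzb, hx0, hxb, ?_, ?_, ?_, ?_, ?_, ?_, ?_, ?_, ?_, ?_,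
        ?_, ?_, ?_, ?_, ?_, ?_⟩
      · exact fun i => add_nonneg (hπ0 i) (mul_nonneg ht0 (htπ₀ i))
      · exact fun i => add_nonneg (hπ1 i) (mul_nonneg ht0 (htπ₁ i))
      · simp only [mulVec_add, mulVec_smul]
        have : G₀.mulVec p₀.y + t • G₀.mulVec ty +
            (H₀.mulVec p₀.w + t • H₀.mulVec tw) - p₀.x =
            (G₀.mulVec p₀.y + H₀.mulVec p₀.w - p₀.x)
              + t • (G₀.mulVec ty + H₀.mulVec tw) := by
          ext i; simp [smul_add]; ring
        rw [this, hhom₀, heq0, smul_zero, add_zero]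
      · simp only [mulVec_add, mulVec_smul]
        have : G₁.mulVec p₀.y + t • G₁.mulVec ty +
            (H₁.mulVec p₀.w + t • H₁.mulVec tw) =
            (G₁.mulVec p₀.y + H₁.mulVec p₀.w)
              + t • (G₁.mulVec ty + H₁.mulVec tw) := by
          ext i; simp [smul_add]; ring
        rw [this, hhom₁, heq1, smul_zero, add_zero]
      · exact fun i => add_nonneg (hy0 i) (mul_nonneg ht0 (hty i))
      · intro i hi
        simp only [Pi.add_apply, Pi.smul_apply, smul_eq_mul, hty_fin i hi,
          mul_zero, add_zero]
        exact hyb i hi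
      · exact fun j => add_nonneg (hw0 j) (mul_nonneg ht0 (htw j))
      · intro j hj
        simp only [Pi.add_apply, Pi.smul_apply, smul_eq_mul, htw_fin j hj,
          mul_zero, add_zero]
        exact hwb j hj
      · exact fun i => add_nonneg (hμy i) (mul_nonneg ht0 (htμy i))
      · exact fun j => add_nonneg (hμw j) (mul_nonneg ht0 (htμw j))
      · exact fun i => add_nonneg (hθy i) (mul_nonneg ht0 (htθy i))
      · intro i hi
        simp [hθysupp i hi, htθy_supp i hi]
      · exact fun j => add_nonneg (hθw j) (mul_nonneg ht0 (htθw j))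
      · intro j hj
        simp [hθwsupp j hj, htθw_supp j hj]
      · simp only [mulVec_add, mulVec_smul]
        have : R.mulVec p₀.y + t • R.mulVec ty + r
            + (G₀.transpose.mulVec p₀.pi0 + t • G₀.transpose.mulVec tπ₀)
            + (G₁.transpose.mulVec p₀.pi1 + t • G₁.transpose.mulVec tπ₁)
            + (p₀.thY + t • tθy) - (p₀.muY + t • tμy) =
            (R.mulVec p₀.y + r + G₀.transpose.mulVec p₀.pi0
              + G₁.transpose.mulVec p₀.pi1 + p₀.thY - p₀.muY)
            + t • (R.mulVec ty + G₀.transpose.mulVec tπ₀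
              + G₁.transpose.mulVec tπ₁ + tθy - tμy) := by
          ext i; simp [smul_add, smul_sub]; ring
        rw [this, hhom₂, hst1, smul_zero, add_zero]
      · simp only [mulVec_add, mulVec_smul]
        have : (H₀.transpose.mulVec p₀.pi0 + t • H₀.transpose.mulVec tπ₀)
            + (H₁.transpose.mulVec p₀.pi1 + t • H₁.transpose.mulVec tπ₁)
            + (p₀.thW + t • tθw) - (p₀.muW + t • tμw) =
            (H₀.transpose.mulVec p₀.pi0 + H₁.transpose.mulVec p₀.pi1
              + p₀.thW - p₀.muW)
            + t • (H₀.transpose.mulVec tπ₀ + H₁.transpose.mulVec tπ₁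
              + tθw - tμw) := by
          ext i; simp [smul_add, smul_sub]; ring
        rw [this, hhom₃, hst2, smul_zero, add_zero]
    · have hobj : (p₀.pi0 + t • tπ₀) ⬝ᵥ p₀.x - cx ⬝ᵥ p₀.x - cz ⬝ᵥ p₀.z
          = base + t * d := by
        simp [add_dotProduct, smul_dotProduct, hbase, hd, smul_eq_mul]; ring
      rw [hobj]
      have h1 : (M - base + 1) / d ≤ t := le_max_right _ _
      have h2 : M - base + 1 ≤ t * d := by
        rw [div_le_iff₀ hpos] at h1; linarith
      linarith
  refine ⟨main, ?_⟩
  rintro ⟨b, hb⟩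
  obtain ⟨p, hpF, _, _, hM⟩ := main b
  exact absurd (hb ⟨p, hpF, rfl⟩) (not_le.mpr hM)
end

section
/- Let Φ : ℝ^α → ℝ^α be continuous and suppose the function y ↦ ⟨Φ y, y⟩ is coercive on the Euclidean space ℝ^α (it tends to +∞ as ‖y‖ → ∞). Assume x̄ ≥ 0, z̄ ≥ 0, ȳᵢ ≥ 0 for i ∈ Sʸ and w̄ⱼ ≥ 0 for j ∈ Sʷ. Then the Duality-based relaxation objective with b₀ = 0 and b₁ = 0, namely (z, x, y, θʸ, θʷ) ↦ -⟨Φ y, y⟩ - Σ_{j ∈ Sʷ} w̄ⱼ θʷⱼ - Σ_{i ∈ Sʸ} ȳᵢ θʸᵢ - ⟨cₓ, x⟩ - ⟨c_z, z⟩, is bounded above on the set of all (z, x, y, θʸ, θʷ) with 0 ≤ z ≤ z̄, 0 ≤ x ≤ x̄, θʸ ≥ 0 and θʷ ≥ 0 (y ranging over all of ℝ^α). -/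
open Matrix

/-- If `Φ` is continuous and `y ↦ ⟨Φ y, y⟩` is coercive on Euclidean space, then (with
`b₀ = 0`, `b₁ = 0` and nonnegative bounds) the Duality-based relaxation objective is bounded
above over the stated variable ranges. -/
theorem duality_relaxation_bounded_of_coercive
    {α β ι₀ ζ : Type*} [Fintype α] [Fintype β] [Fintype ι₀] [Fintype ζ]
    (Φ : (α → ℝ) → (α → ℝ)) (hΦcont : Continuous Φ)
    (hcoercive : Filter.Tendsto
      (fun y : EuclideanSpace ℝ α => Φ y ⬝ᵥ (y : α → ℝ))
      (Filter.cocompact (EuclideanSpace ℝ α)) Filter.atTop)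
    (zbar : ζ → ℝ) (xbar : ι₀ → ℝ) (cz : ζ → ℝ) (cx : ι₀ → ℝ)
    (Sy : Finset α) (Sw : Finset β) (ybar : α → ℝ) (wbar : β → ℝ)
    (hxbar : 0 ≤ xbar) (hzbar : 0 ≤ zbar)
    (hybar : ∀ i ∈ Sy, 0 ≤ ybar i) (hwbar : ∀ j ∈ Sw, 0 ≤ wbar j) :
    BddAbove {v : ℝ | ∃ (z : ζ → ℝ) (x : ι₀ → ℝ) (y : α → ℝ) (θy : α → ℝ) (θw : β → ℝ),
      0 ≤ z ∧ z ≤ zbar ∧ 0 ≤ x ∧ x ≤ xbar ∧ 0 ≤ θy ∧ 0 ≤ θw ∧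
      v = -(Φ y ⬝ᵥ y)
        - (∑ j ∈ Sw, wbar j * θw j) - (∑ i ∈ Sy, ybar i * θy i)
        - cx ⬝ᵥ x - cz ⬝ᵥ z} := by
  -- The map y ↦ ⟨Φ y, y⟩ is continuous on Euclidean space
  have hf : Continuous (fun y : EuclideanSpace ℝ α => Φ y ⬝ᵥ (y : α → ℝ)) := by
    have hg : Continuous (fun y : α → ℝ => Φ y ⬝ᵥ y) := by
      apply continuous_finset_sum
      intro i _
      exact ((continuous_apply i).comp hΦcont).mul (continuous_apply i)
    exact hg.comp (EuclideanSpace.equiv α ℝ).continuous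
  -- lower bound for ⟨Φ y, y⟩
  obtain ⟨K, hK, hKs⟩ := Filter.mem_cocompact.mp (hcoercive.eventually_ge_atTop 0)
  have hbb : BddBelow ((fun y : EuclideanSpace ℝ α => Φ y ⬝ᵥ (y : α → ℝ)) '' K) :=
    (hK.image hf).bddBelow
  obtain ⟨m, hm⟩ := hbb
  have hlow : ∀ y : α → ℝ, min m 0 ≤ Φ y ⬝ᵥ y := by
    intro y
    by_cases hy : (WithLp.toLp 2 y : EuclideanSpace ℝ α) ∈ K
    · exact le_trans (min_le_left _ _) (hm ⟨WithLp.toLp 2 y, hy, rfl⟩)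
    · exact le_trans (min_le_right _ _) (hKs hy)
  refine ⟨-min m 0 + (∑ i, |cx i| * xbar i) + (∑ j, |cz j| * zbar j), ?_⟩
  rintro v ⟨z, x, y, θy, θw, hz0, hz1, hx0, hx1, hθy, hθw, rfl⟩
  have h1 : 0 ≤ ∑ j ∈ Sw, wbar j * θw j :=
    Finset.sum_nonneg fun j hj => mul_nonneg (hwbar j hj) (hθw j)
  have h2 : 0 ≤ ∑ i ∈ Sy, ybar i * θy i :=
    Finset.sum_nonneg fun i hi => mul_nonneg (hybar i hi) (hθy i)
  have h3 : -(cx ⬝ᵥ x) ≤ ∑ i, |cx i| * xbar i := by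
    rw [dotProduct, ← Finset.sum_neg_distrib]
    apply Finset.sum_le_sum
    intro i _
    calc -(cx i * x i) = (-cx i) * x i := by ring
      _ ≤ |cx i| * x i := mul_le_mul_of_nonneg_right (neg_le_abs _) (hx0 i)
      _ ≤ |cx i| * xbar i := mul_le_mul_of_nonneg_left (hx1 i) (abs_nonneg _)
  have h4 : -(cz ⬝ᵥ z) ≤ ∑ j, |cz j| * zbar j := by
    rw [dotProduct, ← Finset.sum_neg_distrib]
    apply Finset.sum_le_sum
    intro j _
    calc -(cz j * z j) = (-cz j) * z j := by ring
      _ ≤ |cz j| * z j := mul_le_mul_of_nonneg_right (neg_le_abs _) (hz0 j)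
      _ ≤ |cz j| * zbar j := mul_le_mul_of_nonneg_left (hz1 j) (abs_nonneg _)
  have h0 : -(Φ y ⬝ᵥ y) ≤ -min m 0 := neg_le_neg (hlow y)
  linarith
end
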